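/- arXiv:2102.09818 — 17 statements merged into one kernel-verified Lean document; each statement's English description precedes it below -/
import Mathlib

section
/- Let C be a transcription category with pseudoproduct x⊗y = (x◁y⁺)∘(x⁻▷y). Then for all x,y ∈ C and all e ∈ C⁺: (i) if x⁻ = y⁺ (so x∘y is defined) then x⊗y = x∘y; (ii) e⊗x = e▷x and x⊗e = x◁e; (iii) (x⊗y)⁺ = (x◁y⁺)⁺ and (x⊗y)⁻ = (x⁻▷y)⁻; (iv) e▷(x⊗y) = (e▷x)⊗y; (v) x⊗y = (x◁(x⁻▷y⁺))∘((x⁻▷y⁺)▷y). -/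
/-- A transcription category: a small category `(C, ∘, ⁺, ⁻)` — with the partial
composition encoded as a total function `comp` whose value is constrained only
when `tgt x = src y` (i.e. when `x ∘ y` is defined) — equipped with transcription
maps `ltr e x` (for `e ▷ x`) and `rtr x f` (for `x ◁ f`), constrained only when
`e`, `f` are objects, i.e. members of `C⁺ = {e : e = e⁺}`.  Here `src x` denotes
`x⁺` and `tgt x` denotes `x⁻`. -/
structure TranscriptionCategory (C : Type*) where
  comp : C → C → C
  src : C → C
  tgt : C → C
  ltr : C → C → C
  rtr : C → C → C
  /- (1a) `x⁺ ∘ x = x = x ∘ x⁻` -/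
  comp_src : ∀ x, comp (src x) x = x
  comp_tgt : ∀ x, comp x (tgt x) = x
  /- (1b) `(x⁺)⁻ = x⁺` and `(x⁻)⁺ = x⁻` -/
  tgt_src : ∀ x, tgt (src x) = src x
  src_tgt : ∀ x, src (tgt x) = tgt x
  /- (1d) when `x⁻ = y⁺`, `(x∘y)⁺ = x⁺` and `(x∘y)⁻ = y⁻` -/
  src_comp : ∀ x y, tgt x = src y → src (comp x y) = src x
  tgt_comp : ∀ x y, tgt x = src y → tgt (comp x y) = tgt y
  /- (1e) associativity whenever the products are defined -/
  comp_assoc : ∀ x y z, tgt x = src y → tgt y = src z →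
    comp (comp x y) z = comp x (comp y z)
  /- (2a) `e ▷ f = e ◁ f` -/
  ltr_eq_rtr : ∀ e f, e = src e → f = src f → ltr e f = rtr e f
  /- (2b) `x⁺ ▷ x = x = x ◁ x⁻` -/
  ltr_src_self : ∀ x, ltr (src x) x = x
  rtr_tgt_self : ∀ x, rtr x (tgt x) = x
  /- (2c) `e ▷ (f ▷ x) = (e ▷ f) ▷ x` and `(x ◁ e) ◁ f = x ◁ (e ◁ f)` -/
  ltr_ltr : ∀ e f x, e = src e → f = src f → ltr e (ltr f x) = ltr (ltr e f) x
  rtr_rtr : ∀ e f x, e = src e → f = src f → rtr (rtr x e) f = rtr x (rtr e f)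
  /- (2d) `e ▷ (x∘y) = (e▷x) ∘ ((e▷x)⁻ ▷ y)` and `(x∘y) ◁ f = (x ◁ (y◁f)⁺) ∘ (y◁f)` -/
  ltr_comp : ∀ e x y, e = src e → tgt x = src y →
    ltr e (comp x y) = comp (ltr e x) (ltr (tgt (ltr e x)) y)
  rtr_comp : ∀ f x y, f = src f → tgt x = src y →
    rtr (comp x y) f = comp (rtr x (src (rtr y f))) (rtr y f)
  /- (2e) `(e▷x)⁺ = e ▷ x⁺` and `(x◁f)⁻ = x⁻ ◁ f` -/
  src_ltr : ∀ e x, e = src e → src (ltr e x) = ltr e (src x)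
  tgt_rtr : ∀ f x, f = src f → tgt (rtr x f) = rtr (tgt x) f
  /- (2f) `(e▷x) ◁ f = e ▷ (x◁f)` -/
  rtr_ltr : ∀ e f x, e = src e → f = src f → rtr (ltr e x) f = ltr e (rtr x f)

/-- The pseudoproduct `x ⊗ y = (x ◁ y⁺) ∘ (x⁻ ▷ y)`. -/
def TranscriptionCategory.otimes {C : Type*} (T : TranscriptionCategory C)
    (x y : C) : C :=
  T.comp (T.rtr x (T.src y)) (T.ltr (T.tgt x) y)

/-- Lemma 3.1: basic properties of the pseudoproduct in a transcription category. -/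
theorem pseudoproduct_basic_properties {C : Type*} (T : TranscriptionCategory C)
    (x y e : C) (he : e = T.src e) :
    -- (i) if x⁻ = y⁺ then x ⊗ y = x ∘ y
    (T.tgt x = T.src y → T.otimes x y = T.comp x y) ∧
    -- (ii) e ⊗ x = e ▷ x and x ⊗ e = x ◁ e
    (T.otimes e x = T.ltr e x ∧ T.otimes x e = T.rtr x e) ∧
    -- (iii) (x⊗y)⁺ = (x◁y⁺)⁺ and (x⊗y)⁻ = (x⁻▷y)⁻
    (T.src (T.otimes x y) = T.src (T.rtr x (T.src y)) ∧
      T.tgt (T.otimes x y) = T.tgt (T.ltr (T.tgt x) y)) ∧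
    -- (iv) e ▷ (x⊗y) = (e▷x) ⊗ y
    (T.ltr e (T.otimes x y) = T.otimes (T.ltr e x) y) ∧
    -- (v) x ⊗ y = (x ◁ (x⁻▷y⁺)) ∘ ((x⁻▷y⁺) ▷ y)
    (T.otimes x y = T.comp (T.rtr x (T.ltr (T.tgt x) (T.src y)))
      (T.ltr (T.ltr (T.tgt x) (T.src y)) y)) := by
  have hobj_src : ∀ z : C, T.src z = T.src (T.src z) := fun z => by
    have h := T.src_tgt (T.src z)
    rw [T.tgt_src] at h
    exact h.symm
  have hobj_tgt : ∀ z : C, T.tgt z = T.src (T.tgt z) := fun z => (T.src_tgt z).symm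
  -- definedness of the pseudoproduct's defining composition
  have hdef : ∀ u v : C, T.tgt (T.rtr u (T.src v)) = T.src (T.ltr (T.tgt u) v) := by
    intro u v
    rw [T.tgt_rtr (T.src v) u (hobj_src v),
        T.src_ltr (T.tgt u) v (hobj_tgt u),
        T.ltr_eq_rtr (T.tgt u) (T.src v) (hobj_tgt u) (hobj_src v)]
  -- key lemma: tgt (g ▷ z) ▷ z⁻ = tgt (g ▷ z)
  have hA : ∀ g z : C, g = T.src g →
      T.ltr (T.tgt (T.ltr g z)) (T.tgt z) = T.tgt (T.ltr g z) := by
    intro g z hg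
    have h1 : T.rtr (T.ltr g z) (T.tgt z) = T.ltr g z := by
      rw [T.rtr_ltr g (T.tgt z) z hg (hobj_tgt z), T.rtr_tgt_self]
    calc T.ltr (T.tgt (T.ltr g z)) (T.tgt z)
        = T.rtr (T.tgt (T.ltr g z)) (T.tgt z) :=
          T.ltr_eq_rtr _ _ (hobj_tgt _) (hobj_tgt z)
      _ = T.tgt (T.rtr (T.ltr g z) (T.tgt z)) :=
          (T.tgt_rtr (T.tgt z) (T.ltr g z) (hobj_tgt z)).symm
      _ = T.tgt (T.ltr g z) := by rw [h1]
  have hte : T.tgt e = e := by rw [he, T.tgt_src, ← he]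
  refine ⟨?_, ⟨?_, ?_⟩, ⟨?_, ?_⟩, ?_, ?_⟩
  · -- (i)
    intro h
    have h1 : T.rtr x (T.src y) = x := by rw [← h, T.rtr_tgt_self]
    have h2 : T.ltr (T.tgt x) y = y := by rw [h, T.ltr_src_self]
    simp only [TranscriptionCategory.otimes, h1, h2]
  · -- (ii) left
    have h1 : T.rtr e (T.src x) = T.src (T.ltr e x) := by
      rw [T.src_ltr e x he, T.ltr_eq_rtr e (T.src x) he (hobj_src x)]
    simp only [TranscriptionCategory.otimes, hte, h1, T.comp_src]
  · -- (ii) right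
    have h1 : T.ltr (T.tgt x) e = T.tgt (T.rtr x e) := by
      rw [T.tgt_rtr e x he, T.ltr_eq_rtr (T.tgt x) e (hobj_tgt x) he]
    simp only [TranscriptionCategory.otimes, ← he, h1, T.comp_tgt]
  · -- (iii) src
    exact T.src_comp _ _ (hdef x y)
  · -- (iii) tgt
    exact T.tgt_comp _ _ (hdef x y)
  · -- (iv)
    set a := T.rtr x (T.src y) with ha
    set b := T.ltr (T.tgt x) y with hb
    set u := T.tgt (T.ltr e x) with hu
    have hu_obj : u = T.src u := hobj_tgt _
    -- e ▷ a = (e ▷ x) ◁ y⁺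
    have hea : T.ltr e a = T.rtr (T.ltr e x) (T.src y) :=
      (T.rtr_ltr e (T.src y) x he (hobj_src y)).symm
    set t := T.tgt (T.ltr e a) with ht
    have ht_obj : t = T.src t := hobj_tgt _
    -- t = u ▷ y⁺
    have ht_eq : t = T.ltr u (T.src y) := by
      rw [ht, hea, T.tgt_rtr (T.src y) (T.ltr e x) (hobj_src y), ← hu,
        T.ltr_eq_rtr u (T.src y) hu_obj (hobj_src y)]
    -- tgt a = (tgt x) ▷ y⁺
    have hta : T.tgt a = T.ltr (T.tgt x) (T.src y) := by
      rw [ha, T.tgt_rtr (T.src y) x (hobj_src y),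
        T.ltr_eq_rtr (T.tgt x) (T.src y) (hobj_tgt x) (hobj_src y)]
    set s := T.ltr t (T.tgt x) with hs
    have hs_obj : s = T.src s := by
      rw [hs, T.src_ltr t (T.tgt x) ht_obj, ← hobj_tgt x]
    -- s ▷ y⁺ = t
    have hsy : T.ltr s (T.src y) = t := by
      rw [hs, ← T.ltr_ltr t (T.tgt x) (T.src y) ht_obj (hobj_tgt x), ← hta, ht]
      exact hA e a he
    -- t ▷ b = u ▷ y
    have htb : T.ltr t b = T.ltr u y := by
      calc T.ltr t b = T.ltr (T.ltr t (T.tgt x)) y :=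
            T.ltr_ltr t (T.tgt x) y ht_obj (hobj_tgt x)
        _ = T.ltr s (T.ltr (T.src y) y) := by rw [← hs, T.ltr_src_self]
        _ = T.ltr (T.ltr s (T.src y)) y := T.ltr_ltr s (T.src y) y hs_obj (hobj_src y)
        _ = T.ltr t y := by rw [hsy]
        _ = T.ltr (T.ltr u (T.src y)) y := by rw [ht_eq]
        _ = T.ltr u (T.ltr (T.src y) y) :=
            (T.ltr_ltr u (T.src y) y hu_obj (hobj_src y)).symm
        _ = T.ltr u y := by rw [T.ltr_src_self]
    calc T.ltr e (T.otimes x y)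
        = T.comp (T.ltr e a) (T.ltr t b) := T.ltr_comp e a b he (hdef x y)
      _ = T.comp (T.rtr (T.ltr e x) (T.src y)) (T.ltr u y) := by rw [hea, htb]
      _ = T.otimes (T.ltr e x) y := rfl
  · -- (v)
    have h1 : T.rtr x (T.ltr (T.tgt x) (T.src y)) = T.rtr x (T.src y) := by
      rw [T.ltr_eq_rtr (T.tgt x) (T.src y) (hobj_tgt x) (hobj_src y),
        ← T.rtr_rtr (T.tgt x) (T.src y) x (hobj_tgt x) (hobj_src y),
        T.rtr_tgt_self]
    have h2 : T.ltr (T.ltr (T.tgt x) (T.src y)) y = T.ltr (T.tgt x) y := by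
      rw [← T.ltr_ltr (T.tgt x) (T.src y) y (hobj_tgt x) (hobj_src y),
        T.ltr_src_self]
    rw [h1, h2]
    rfl
end

section
/- If C is a transcription category, then the pseudoproduct ⊗ defined by x⊗y = (x◁y⁺)∘(x⁻▷y) is associative; that is, (C,⊗) is a semigroup. -/
/-- Theorem 3.2: the pseudoproduct of a transcription category is associative,
i.e. `(C, ⊗)` is a semigroup. -/
theorem pseudoproduct_assoc {C : Type*} (T : TranscriptionCategory C) :
    ∀ x y z : C, T.otimes (T.otimes x y) z = T.otimes x (T.otimes y z) := by
  -- every `src` and every `tgt` is an object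
  have oS : ∀ a : C, T.src a = T.src (T.src a) := by
    intro a
    have h2 := T.src_tgt (T.src a)
    rw [T.tgt_src a] at h2
    exact h2.symm
  have oT : ∀ a : C, T.tgt a = T.src (T.tgt a) := fun a => (T.src_tgt a).symm
  have tT : ∀ a : C, T.tgt (T.tgt a) = T.tgt a := by
    intro a
    have h := T.tgt_src (T.tgt a)
    rw [T.src_tgt] at h
    exact h
  intro x y z
  simp only [TranscriptionCategory.otimes]
  set A := T.rtr x (T.src y) with hA
  set B := T.ltr (T.tgt x) y with hB
  set r := T.rtr y (T.src z) with hr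
  set s := T.ltr (T.tgt y) z with hs
  set q := T.ltr (T.tgt x) r with hq
  -- definedness of the two inner compositions
  have hAB : T.tgt A = T.src B := by
    rw [hA, hB, T.tgt_rtr (T.src y) x (oS y), ← T.ltr_eq_rtr _ _ (oT x) (oS y),
      T.src_ltr _ _ (oT x)]
  have hrs : T.tgt r = T.src s := by
    rw [hr, hs, T.tgt_rtr (T.src z) y (oS z), ← T.ltr_eq_rtr _ _ (oT y) (oS z),
      T.src_ltr _ _ (oT y)]
  -- q is also B ◁ z⁺
  have hq' : T.rtr B (T.src z) = q := by
    rw [hB, T.rtr_ltr _ _ _ (oT x) (oS z), hq, hr]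
  -- y⁺ ▷ r = r  and  y⁺ ▷ r⁺ = r⁺
  have h0 : T.ltr (T.src y) r = r := by
    rw [hr, ← T.rtr_ltr _ _ _ (oS y) (oS z), T.ltr_src_self y]
  have hyr : T.ltr (T.src y) (T.src r) = T.src r := by
    calc T.ltr (T.src y) (T.src r) = T.src (T.ltr (T.src y) r) :=
          (T.src_ltr _ _ (oS y)).symm
      _ = T.src r := by rw [h0]
  -- q⁺ = A⁻ ◁ r⁺
  have hsq : T.src q = T.rtr (T.tgt A) (T.src r) := by
    calc T.src q = T.ltr (T.tgt x) (T.src r) := T.src_ltr _ _ (oT x)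
      _ = T.ltr (T.tgt x) (T.ltr (T.src y) (T.src r)) := by rw [hyr]
      _ = T.ltr (T.ltr (T.tgt x) (T.src y)) (T.src r) :=
          T.ltr_ltr _ _ _ (oT x) (oS y)
      _ = T.ltr (T.tgt A) (T.src r) := by
          rw [T.ltr_eq_rtr _ _ (oT x) (oS y), hA, ← T.tgt_rtr (T.src y) x (oS y)]
      _ = T.rtr (T.tgt A) (T.src r) := T.ltr_eq_rtr _ _ (oT A) (oS r)
  -- (i): A ◁ q⁺ = x ◁ r⁺
  have hi : T.rtr A (T.src q) = T.rtr x (T.src r) := by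
    calc T.rtr A (T.src q) = T.rtr A (T.rtr (T.tgt A) (T.src r)) := by rw [hsq]
      _ = T.rtr (T.rtr A (T.tgt A)) (T.src r) :=
          (T.rtr_rtr _ _ _ (oT A) (oS r)).symm
      _ = T.rtr A (T.src r) := by rw [T.rtr_tgt_self A]
      _ = T.rtr x (T.rtr (T.src y) (T.src r)) := by
          rw [hA, T.rtr_rtr _ _ _ (oS y) (oS r)]
      _ = T.rtr x (T.src r) := by rw [← T.ltr_eq_rtr _ _ (oS y) (oS r), hyr]
  -- definedness for the outer associativity, left piece
  have h1 : T.tgt (T.rtr A (T.src q)) = T.src q := by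
    calc T.tgt (T.rtr A (T.src q)) = T.rtr (T.tgt A) (T.src q) :=
          T.tgt_rtr (T.src q) A (oS q)
      _ = T.rtr (T.tgt A) (T.rtr (T.tgt A) (T.src r)) := by rw [hsq]
      _ = T.rtr (T.rtr (T.tgt A) (T.tgt A)) (T.src r) :=
          (T.rtr_rtr _ _ _ (oT A) (oS r)).symm
      _ = T.rtr (T.tgt A) (T.src r) := by
          have h := T.rtr_tgt_self (T.tgt A)
          rw [tT A] at h
          rw [h]
      _ = T.src q := hsq.symm
  -- B ◁ y⁻ = B and B⁻ ▷ y⁻ = B⁻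
  have hBy : T.rtr B (T.tgt y) = B := by
    rw [hB, T.rtr_ltr _ _ _ (oT x) (oT y), T.rtr_tgt_self y]
  have huy : T.rtr (T.tgt B) (T.tgt y) = T.tgt B := by
    conv_rhs => rw [← hBy]
    rw [T.tgt_rtr (T.tgt y) B (oT y)]
  have hluy : T.ltr (T.tgt B) (T.tgt y) = T.tgt B := by
    rw [T.ltr_eq_rtr _ _ (oT B) (oT y)]; exact huy
  -- q = B ◁ s⁺
  have hss : T.src s = T.ltr (T.tgt y) (T.src z) := T.src_ltr _ _ (oT y)
  have hq2 : T.rtr B (T.src s) = q := by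
    calc T.rtr B (T.src s) = T.rtr B (T.rtr (T.tgt y) (T.src z)) := by
          rw [hss, T.ltr_eq_rtr _ _ (oT y) (oS z)]
      _ = T.rtr (T.rtr B (T.tgt y)) (T.src z) :=
          (T.rtr_rtr _ _ _ (oT y) (oS z)).symm
      _ = q := by rw [hBy, hq']
  have htq : T.tgt q = T.rtr (T.tgt B) (T.src s) := by
    rw [← hq2, T.tgt_rtr (T.src s) B (oS s)]
  -- (ii): B⁻ ▷ z = q⁻ ▷ s
  have hii : T.ltr (T.tgt B) z = T.ltr (T.tgt q) s := by
    calc T.ltr (T.tgt B) z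
        = T.ltr (T.tgt B) (T.ltr (T.tgt y) z) := by
          rw [T.ltr_ltr _ _ _ (oT B) (oT y), hluy]
      _ = T.ltr (T.tgt B) s := by rw [hs]
      _ = T.ltr (T.tgt B) (T.ltr (T.src s) s) := by rw [T.ltr_src_self s]
      _ = T.ltr (T.ltr (T.tgt B) (T.src s)) s := T.ltr_ltr _ _ _ (oT B) (oS s)
      _ = T.ltr (T.tgt q) s := by
          rw [T.ltr_eq_rtr _ _ (oT B) (oS s), ← htq]
  -- definedness for the outer associativity, right piece
  have h2 : T.tgt q = T.src (T.ltr (T.tgt B) z) := by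
    calc T.tgt q = T.rtr (T.tgt B) (T.src z) := by
          rw [← hq', T.tgt_rtr (T.src z) B (oS z)]
      _ = T.ltr (T.tgt B) (T.src z) := (T.ltr_eq_rtr _ _ (oT B) (oS z)).symm
      _ = T.src (T.ltr (T.tgt B) z) := (T.src_ltr _ _ (oT B)).symm
  -- assemble everything
  rw [T.rtr_comp (T.src z) A B (oS z) hAB, hq', T.tgt_comp A B hAB,
    T.src_comp r s hrs, T.ltr_comp (T.tgt x) r s (oT x) hrs, ← hq,
    ← hi, ← hii]
  exact T.comp_assoc _ _ _ h1 h2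
end

section
/- Let (S,·,⁺,⁻) be a semigroup with two unary operations in which the identities x⁺x = x, xx⁻ = x, (x⁺)⁻ = x⁺ and (x⁻)⁺ = x⁻ hold. Then: (i) the pair of identities x⁺y⁺ = (x⁺y)⁺ and x⁻y⁻ = (xy⁻)⁻ holds if and only if the identities (xy⁺)⁻ = x⁻y⁺ and x⁻y⁺ = (x⁻y)⁺ hold; (ii) if S⁺ = {x⁺ : x ∈ S} is a band (closed under multiplication with all elements idempotent) and the identities (xy)⁺ = (xy⁺)⁺ and (xy)⁻ = (x⁻y)⁻ hold, then (xy⁺)⁻ = x⁻y⁺ = (x⁻y)⁺ holds. -/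
/-- Lemma 4.2 (`axequiv`): let `(S, ·, ⁺, ⁻)` be a semigroup with two unary
operations satisfying `x⁺x = x`, `xx⁻ = x`, `(x⁺)⁻ = x⁺` and `(x⁻)⁺ = x⁻`.
(i) The identities `x⁺y⁺ = (x⁺y)⁺` and `x⁻y⁻ = (xy⁻)⁻` hold together if and only
if the identities `(xy⁺)⁻ = x⁻y⁺` and `x⁻y⁺ = (x⁻y)⁺` hold.
(ii) If `S⁺ = {x⁺ : x ∈ S}` is a band (closed under multiplication with all its
elements idempotent) and the identities `(xy)⁺ = (xy⁺)⁺` and `(xy)⁻ = (x⁻y)⁻`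
hold, then `(xy⁺)⁻ = x⁻y⁺ = (x⁻y)⁺` holds. -/
theorem localisable_axiom_equivalences {S : Type*} [Semigroup S] (p m : S → S)
    (ha : ∀ x : S, p x * x = x)
    (hd : ∀ x : S, x * m x = x)
    (hg1 : ∀ x : S, m (p x) = p x)
    (hg2 : ∀ x : S, p (m x) = m x) :
    -- (i)
    (((∀ x y : S, p x * p y = p (p x * y)) ∧ (∀ x y : S, m x * m y = m (x * m y))) ↔
      ((∀ x y : S, m (x * p y) = m x * p y) ∧ (∀ x y : S, m x * p y = p (m x * y)))) ∧
    -- (ii)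
    (((∀ x y : S, p x * p y ∈ Set.range p) ∧ (∀ x : S, p x * p x = p x)) →
      (∀ x y : S, p (x * y) = p (x * p y)) →
      (∀ x y : S, m (x * y) = m (m x * y)) →
      ∀ x y : S, m (x * p y) = m x * p y ∧ m x * p y = p (m x * y)) := by
  constructor
  · constructor
    · rintro ⟨hc, hf⟩
      refine ⟨fun x y => ?_, fun x y => ?_⟩
      · have h := hf x (p y)
        rw [hg1] at h
        exact h.symm
      · have h := hc (m x) y
        rwa [hg2] at h
    · rintro ⟨h1, h2⟩
      refine ⟨fun x y => ?_, fun x y => ?_⟩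
      · have h := h2 (p x) y
        rwa [hg1] at h
      · have h := h1 x (m y)
        rw [hg2] at h
        exact h.symm
  · rintro ⟨hcl, -⟩ hb he x y
    have hmem : m x * p y ∈ Set.range p := by
      have h := hcl (m x) y
      rwa [hg2] at h
    obtain ⟨z, hz⟩ := hmem
    have hpp : p (p z) = p z := by rw [← hg1 z, hg2, hg1]
    have hfix : m (m x * p y) = m x * p y := by rw [← hz, hg1]
    refine ⟨?_, ?_⟩
    · rw [he x (p y), hfix]
    · rw [hb (m x) y, ← hz, hpp]
end

section
/- If C is a transcription category, then (C,⊗,⁺,⁻), where ⊗ is the pseudoproduct x⊗y = (x◁y⁺)∘(x⁻▷y), is a localisable semigroup: ⊗ is associative and the identities x⁺⊗x = x, (x⊗y)⁺ = (x⊗y⁺)⁺, x⁺⊗y⁺ = (x⁺⊗y)⁺, x⊗x⁻ = x, (x⊗y)⁻ = (x⁻⊗y)⁻, x⁻⊗y⁻ = (x⊗y⁻)⁻, (x⁺)⁻ = x⁺ and (x⁻)⁺ = x⁻ all hold. -/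
namespace TranscriptionCategory

variable {C : Type*} (T : TranscriptionCategory C)

lemma src_src' (x : C) : T.src (T.src x) = T.src x := by
  have h := T.src_tgt (T.src x)
  rwa [T.tgt_src] at h

lemma tgt_tgt' (x : C) : T.tgt (T.tgt x) = T.tgt x := by
  have h := T.tgt_src (T.tgt x)
  rwa [T.src_tgt] at h

lemma obj_src' (x : C) : T.src x = T.src (T.src x) := (T.src_src' x).symm

lemma obj_tgt' (x : C) : T.tgt x = T.src (T.tgt x) := (T.src_tgt x).symm

lemma tgt_of_obj {e : C} (he : e = T.src e) : T.tgt e = e := by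
  calc T.tgt e = T.tgt (T.src e) := by rw [← he]
    _ = T.src e := T.tgt_src e
    _ = e := he.symm

/-- The pseudoproduct is always "defined": `(x ◁ y⁺)⁻ = (x⁻ ▷ y)⁺`. -/
lemma otimes_def' (x y : C) :
    T.tgt (T.rtr x (T.src y)) = T.src (T.ltr (T.tgt x) y) := by
  rw [T.tgt_rtr _ _ (T.obj_src' y), T.src_ltr _ _ (T.obj_tgt' x),
    T.ltr_eq_rtr _ _ (T.obj_tgt' x) (T.obj_src' y)]

lemma src_otimes' (x y : C) :
    T.src (T.otimes x y) = T.src (T.rtr x (T.src y)) :=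
  T.src_comp _ _ (T.otimes_def' x y)

lemma tgt_otimes' (x y : C) :
    T.tgt (T.otimes x y) = T.tgt (T.ltr (T.tgt x) y) :=
  T.tgt_comp _ _ (T.otimes_def' x y)

/-- `w⁺ ◁ (w ◁ f)⁺ = (w ◁ f)⁺`. -/
lemma src_rtr_fix (w f : C) (hf : f = T.src f) :
    T.rtr (T.src w) (T.src (T.rtr w f)) = T.src (T.rtr w f) := by
  have h1 : T.ltr (T.src w) (T.rtr w f) = T.rtr w f := by
    rw [← T.rtr_ltr _ _ _ (T.obj_src' w) hf, T.ltr_src_self]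
  have h2 := T.src_ltr (T.src w) (T.rtr w f) (T.obj_src' w)
  rw [h1] at h2
  rw [← T.ltr_eq_rtr _ _ (T.obj_src' w) (T.obj_src' (T.rtr w f))]
  exact h2.symm

/-- `(e ▷ w)⁻ ◁ w⁻ = (e ▷ w)⁻`. -/
lemma tgt_ltr_fix (e w : C) (he : e = T.src e) :
    T.rtr (T.tgt (T.ltr e w)) (T.tgt w) = T.tgt (T.ltr e w) := by
  have h1 : T.rtr (T.ltr e w) (T.tgt w) = T.ltr e w := by
    rw [T.rtr_ltr _ _ _ he (T.obj_tgt' w), T.rtr_tgt_self]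
  have h2 := T.tgt_rtr (T.tgt w) (T.ltr e w) (T.obj_tgt' w)
  rw [h1] at h2
  exact h2.symm

/-- `(e ▷ w)⁺ ▷ w = e ▷ w`. -/
lemma ltr_src_absorb (e w : C) (he : e = T.src e) :
    T.ltr (T.src (T.ltr e w)) w = T.ltr e w := by
  rw [T.src_ltr _ _ he, ← T.ltr_ltr _ _ _ he (T.obj_src' w), T.ltr_src_self]

/-- `x ◁ (x⁻ ◁ f) = x ◁ f`. -/
lemma rtr_tgt_absorb (x f : C) (hf : f = T.src f) :
    T.rtr x (T.rtr (T.tgt x) f) = T.rtr x f := by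
  rw [← T.rtr_rtr _ _ _ (T.obj_tgt' x) hf, T.rtr_tgt_self]

/-- `e ▷ (y ⊗ z) = (e ▷ y) ⊗ z` for an object `e`. -/
lemma ltr_otimes (e y z : C) (he : e = T.src e) :
    T.ltr e (T.otimes y z) = T.otimes (T.ltr e y) z := by
  unfold otimes
  rw [T.ltr_comp _ _ _ he (T.otimes_def' y z)]
  rw [← T.rtr_ltr e (T.src z) y he (T.obj_src' z)]
  congr 1
  rw [T.otimes_def' (T.ltr e y) z]
  have hclaim : T.ltr (T.tgt (T.ltr e y)) (T.ltr (T.tgt y) z)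
      = T.ltr (T.tgt (T.ltr e y)) z := by
    rw [T.ltr_ltr _ _ _ (T.obj_tgt' (T.ltr e y)) (T.obj_tgt' y),
      T.ltr_eq_rtr _ _ (T.obj_tgt' (T.ltr e y)) (T.obj_tgt' y),
      T.tgt_ltr_fix e y he]
  rw [← hclaim]
  exact T.ltr_src_absorb _ _ (T.obj_tgt' (T.ltr e y))

lemma otimes_assoc (x y z : C) :
    T.otimes (T.otimes x y) z = T.otimes x (T.otimes y z) := by
  have hxy := T.otimes_def' x y
  have hh : T.src (T.otimes y z) = T.src (T.rtr y (T.src z)) := T.src_otimes' y z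
  have hhobj : T.src (T.rtr y (T.src z)) = T.src (T.src (T.rtr y (T.src z))) :=
    T.obj_src' _
  have hA : T.rtr (T.src y) (T.src (T.rtr y (T.src z))) = T.src (T.rtr y (T.src z)) :=
    T.src_rtr_fix y (T.src z) (T.obj_src' z)
  have hR2 : T.ltr (T.tgt x) (T.otimes y z) = T.otimes (T.ltr (T.tgt x) y) z :=
    T.ltr_otimes (T.tgt x) y z (T.obj_tgt' x)
  have hfirst : T.rtr (T.rtr x (T.src y)) (T.ltr (T.tgt x) (T.src (T.rtr y (T.src z))))
      = T.rtr x (T.src (T.rtr y (T.src z))) := by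
    have e1 : T.rtr (T.tgt (T.rtr x (T.src y))) (T.src (T.rtr y (T.src z)))
        = T.ltr (T.tgt x) (T.src (T.rtr y (T.src z))) := by
      rw [T.tgt_rtr _ _ (T.obj_src' y),
        ← T.ltr_eq_rtr _ _ (T.obj_tgt' x) (T.obj_src' y),
        T.rtr_ltr _ _ _ (T.obj_tgt' x) hhobj, hA]
    rw [← e1, T.rtr_tgt_absorb _ _ hhobj,
      T.rtr_rtr _ _ _ (T.obj_src' y) hhobj, hA]
  have hLbreak : T.rtr (T.comp (T.rtr x (T.src y)) (T.ltr (T.tgt x) y)) (T.src z)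
      = T.comp (T.rtr (T.rtr x (T.src y))
          (T.src (T.rtr (T.ltr (T.tgt x) y) (T.src z))))
        (T.rtr (T.ltr (T.tgt x) y) (T.src z)) :=
    T.rtr_comp (T.src z) _ _ (T.obj_src' z) hxy
  have hcond1 : T.tgt (T.rtr (T.rtr x (T.src y))
        (T.src (T.rtr (T.ltr (T.tgt x) y) (T.src z))))
      = T.src (T.rtr (T.ltr (T.tgt x) y) (T.src z)) := by
    rw [T.tgt_rtr _ _ (T.obj_src' _), hxy]
    exact T.src_rtr_fix _ _ (T.obj_src' z)
  have hL : T.otimes (T.otimes x y) z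
      = T.comp (T.rtr (T.rtr x (T.src y))
          (T.src (T.rtr (T.ltr (T.tgt x) y) (T.src z))))
        (T.otimes (T.ltr (T.tgt x) y) z) := by
    show T.comp (T.rtr (T.otimes x y) (T.src z)) (T.ltr (T.tgt (T.otimes x y)) z) = _
    rw [T.tgt_otimes' x y,
      show T.otimes x y = T.comp (T.rtr x (T.src y)) (T.ltr (T.tgt x) y) from rfl,
      hLbreak, T.comp_assoc _ _ _ hcond1 (T.otimes_def' _ z)]
    rfl
  have hR : T.otimes x (T.otimes y z)
      = T.comp (T.rtr x (T.src (T.rtr y (T.src z))))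
          (T.otimes (T.ltr (T.tgt x) y) z) := by
    show T.comp (T.rtr x (T.src (T.otimes y z))) (T.ltr (T.tgt x) (T.otimes y z)) = _
    rw [hh, hR2]
  have hs2 : T.src (T.rtr (T.ltr (T.tgt x) y) (T.src z))
      = T.ltr (T.tgt x) (T.src (T.rtr y (T.src z))) := by
    rw [← T.src_otimes' (T.ltr (T.tgt x) y) z, ← hR2,
      T.src_ltr _ _ (T.obj_tgt' x), hh]
  rw [hL, hR, hs2, hfirst]

lemma part_a (x : C) : T.otimes (T.src x) x = x := by
  show T.comp (T.rtr (T.src x) (T.src x)) (T.ltr (T.tgt (T.src x)) x) = x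
  rw [T.tgt_src, T.ltr_src_self]
  have h : T.rtr (T.src x) (T.src x) = T.src x := by
    have h0 := T.rtr_tgt_self (T.src x)
    rwa [T.tgt_src] at h0
  rw [h, T.comp_src]

lemma part_d (x : C) : T.otimes x (T.tgt x) = x := by
  show T.comp (T.rtr x (T.src (T.tgt x))) (T.ltr (T.tgt x) (T.tgt x)) = x
  rw [T.src_tgt, T.rtr_tgt_self]
  have h : T.ltr (T.tgt x) (T.tgt x) = T.tgt x := by
    have h0 := T.ltr_src_self (T.tgt x)
    rwa [T.src_tgt] at h0
  rw [h, T.comp_tgt]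

lemma part_b (x y : C) : T.src (T.otimes x y) = T.src (T.otimes x (T.src y)) := by
  rw [T.src_otimes', T.src_otimes' x (T.src y), ← T.obj_src' y]

lemma part_e (x y : C) : T.tgt (T.otimes x y) = T.tgt (T.otimes (T.tgt x) y) := by
  rw [T.tgt_otimes', T.tgt_otimes' (T.tgt x) y, T.tgt_tgt']

lemma part_c (x y : C) :
    T.otimes (T.src x) (T.src y) = T.src (T.otimes (T.src x) y) := by
  have hobj : T.ltr (T.src x) (T.src y) = T.src (T.ltr (T.src x) (T.src y)) := by
    rw [T.src_ltr _ _ (T.obj_src' x), ← T.obj_src' y]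
  have h1 : T.otimes (T.src x) (T.src y) = T.ltr (T.src x) (T.src y) := by
    show T.comp (T.rtr (T.src x) (T.src (T.src y)))
        (T.ltr (T.tgt (T.src x)) (T.src y)) = _
    rw [← T.obj_src' y, T.tgt_src,
      ← T.ltr_eq_rtr _ _ (T.obj_src' x) (T.obj_src' y)]
    calc T.comp (T.ltr (T.src x) (T.src y)) (T.ltr (T.src x) (T.src y))
        = T.comp (T.ltr (T.src x) (T.src y)) (T.tgt (T.ltr (T.src x) (T.src y))) := by
          rw [T.tgt_of_obj hobj]
      _ = _ := T.comp_tgt _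
  have h2 : T.src (T.otimes (T.src x) y) = T.ltr (T.src x) (T.src y) := by
    rw [T.src_otimes', ← T.ltr_eq_rtr _ _ (T.obj_src' x) (T.obj_src' y),
      T.src_ltr _ _ (T.obj_src' x), ← T.obj_src' y]
  rw [h1, h2]

lemma part_f (x y : C) :
    T.otimes (T.tgt x) (T.tgt y) = T.tgt (T.otimes x (T.tgt y)) := by
  have hobj : T.ltr (T.tgt x) (T.tgt y) = T.src (T.ltr (T.tgt x) (T.tgt y)) := by
    rw [T.src_ltr _ _ (T.obj_tgt' x), ← T.obj_tgt' y]
  have h1 : T.otimes (T.tgt x) (T.tgt y) = T.ltr (T.tgt x) (T.tgt y) := by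
    show T.comp (T.rtr (T.tgt x) (T.src (T.tgt y)))
        (T.ltr (T.tgt (T.tgt x)) (T.tgt y)) = _
    rw [T.src_tgt y, T.tgt_tgt' x,
      ← T.ltr_eq_rtr _ _ (T.obj_tgt' x) (T.obj_tgt' y)]
    calc T.comp (T.ltr (T.tgt x) (T.tgt y)) (T.ltr (T.tgt x) (T.tgt y))
        = T.comp (T.ltr (T.tgt x) (T.tgt y)) (T.tgt (T.ltr (T.tgt x) (T.tgt y))) := by
          rw [T.tgt_of_obj hobj]
      _ = _ := T.comp_tgt _
  have h2 : T.tgt (T.otimes x (T.tgt y)) = T.ltr (T.tgt x) (T.tgt y) := by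
    rw [T.tgt_otimes' x (T.tgt y),
      T.ltr_eq_rtr _ _ (T.obj_tgt' x) (T.obj_tgt' y),
      T.tgt_rtr _ _ (T.obj_tgt' y), T.tgt_tgt' x]
  rw [h1, h2]

end TranscriptionCategory

/-- Theorem 4.4 (Theorem `th1`): if `C` is a transcription category then
`(C, ⊗, ⁺, ⁻)` is a localisable semigroup. -/
theorem transcription_category_gives_localisable {C : Type*}
    (T : TranscriptionCategory C) :
    -- ⊗ is associative
    (∀ x y z : C, T.otimes (T.otimes x y) z = T.otimes x (T.otimes y z)) ∧
    -- (a) x⁺ ⊗ x = x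
    (∀ x : C, T.otimes (T.src x) x = x) ∧
    -- (b) (x⊗y)⁺ = (x⊗y⁺)⁺
    (∀ x y : C, T.src (T.otimes x y) = T.src (T.otimes x (T.src y))) ∧
    -- (c) x⁺ ⊗ y⁺ = (x⁺⊗y)⁺
    (∀ x y : C, T.otimes (T.src x) (T.src y) = T.src (T.otimes (T.src x) y)) ∧
    -- (d) x ⊗ x⁻ = x
    (∀ x : C, T.otimes x (T.tgt x) = x) ∧
    -- (e) (x⊗y)⁻ = (x⁻⊗y)⁻
    (∀ x y : C, T.tgt (T.otimes x y) = T.tgt (T.otimes (T.tgt x) y)) ∧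
    -- (f) x⁻ ⊗ y⁻ = (x⊗y⁻)⁻
    (∀ x y : C, T.otimes (T.tgt x) (T.tgt y) = T.tgt (T.otimes x (T.tgt y))) ∧
    -- (g) (x⁺)⁻ = x⁺ and (x⁻)⁺ = x⁻
    (∀ x : C, T.tgt (T.src x) = T.src x) ∧ (∀ x : C, T.src (T.tgt x) = T.tgt x) :=
  ⟨T.otimes_assoc, T.part_a, T.part_b, T.part_c, T.part_d, T.part_e, T.part_f,
    T.tgt_src, T.src_tgt⟩
end

section
/- If (S,·,⁺,⁻) is a localisable semigroup, then (S,∘,⁺,⁻) — where the trace product x∘y is defined exactly when x⁻ = y⁺ and then x∘y = x·y, and the transcription maps are e▷x = e·x and x◁f = x·f for e,f ∈ S⁺ — is a transcription category: axioms (1a)–(1e) for a small category and (2a)–(2f) for the transcription maps all hold. -/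
/-- Theorem 4.6 (Theorem `th2`): if `(S, ·, ⁺, ⁻)` is a localisable semigroup, then
`S` becomes a transcription category under the trace product `x ∘ y = x · y`
(defined exactly when `x⁻ = y⁺`) and the transcription maps `e ▷ x = e·x`,
`x ◁ f = x·f`. -/
theorem localisable_gives_transcription_category {S : Type*} [Semigroup S]
    (p m : S → S)
    (ha : ∀ x : S, p x * x = x)
    (hb : ∀ x y : S, p (x * y) = p (x * p y))
    (hc : ∀ x y : S, p x * p y = p (p x * y))
    (hd : ∀ x : S, x * m x = x)
    (he : ∀ x y : S, m (x * y) = m (m x * y))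
    (hf : ∀ x y : S, m x * m y = m (x * m y))
    (hg1 : ∀ x : S, m (p x) = p x)
    (hg2 : ∀ x : S, p (m x) = m x) :
    ∃ T : TranscriptionCategory S,
      T.comp = (fun x y => x * y) ∧ T.src = p ∧ T.tgt = m ∧
      T.ltr = (fun e x => e * x) ∧ T.rtr = (fun x f => x * f) := by
  refine ⟨{
    comp := fun x y => x * y
    src := p
    tgt := m
    ltr := fun e x => e * x
    rtr := fun x f => x * f
    comp_src := ha
    comp_tgt := hd
    tgt_src := hg1
    src_tgt := hg2
    src_comp := fun x y h => by rw [hb, ← h, hd]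
    tgt_comp := fun x y h => by rw [he, h, ha]
    comp_assoc := fun x y z _ _ => mul_assoc x y z
    ltr_eq_rtr := fun _ _ _ _ => rfl
    ltr_src_self := ha
    rtr_tgt_self := hd
    ltr_ltr := fun e f x _ _ => (mul_assoc e f x).symm
    rtr_rtr := fun e f x _ _ => mul_assoc x e f
    ltr_comp := fun e x y _ _ => by
      show e * (x * y) = (e * x) * (m (e * x) * y)
      rw [← mul_assoc (e * x), hd, mul_assoc]
    rtr_comp := fun f x y _ _ => by
      show (x * y) * f = (x * p (y * f)) * (y * f)
      conv_rhs => rw [mul_assoc, ha]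
      rw [mul_assoc]
    src_ltr := fun e x hpe => by
      conv_lhs => rw [hpe]
      rw [← hc, ← hpe]
    tgt_rtr := fun f x hpf => by
      have hmf : m f = f := by rw [hpf, hg1, ← hpf]
      conv_lhs => rw [← hmf]
      rw [← hf, hmf]
    rtr_ltr := fun e f x _ _ => mul_assoc e x f
  }, rfl, rfl, rfl, rfl, rfl⟩
end

section
/- The constructions between transcription categories and localisable semigroups are mutually inverse: (i) if C is a transcription category and x,y ∈ C with x⁻ = y⁺, then x⊗y = x∘y, and for e ∈ C⁺, e⊗x = e▷x and x⊗e = x◁e (so the trace product and transcription maps derived from (C,⊗,⁺,⁻) recover the original structure of C); (ii) if S is a localisable semigroup, then for all x,y ∈ S, (x·y⁺)⁻ = (x⁻·y)⁺ and x·y = (x·y⁺)·(x⁻·y) (so the pseudoproduct of the transcription category derived from S recovers the original multiplication). -/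
/-- Theorem 4.7 (Theorem `equiv`): the constructions between transcription
categories and localisable semigroups are mutually inverse.

(i) In a transcription category, the pseudoproduct restricts to the composition
(`x⁻ = y⁺` implies `x ⊗ y = x ∘ y`) and to the transcription maps
(`e ⊗ x = e ▷ x` and `x ⊗ e = x ◁ e` for an object `e`); so the trace product
and transcription maps derived from `(C, ⊗, ⁺, ⁻)` recover the structure of `C`.

(ii) In a localisable semigroup, `(x·y⁺)⁻ = (x⁻·y)⁺` and
`x·y = (x·y⁺)·(x⁻·y)`; so the pseudoproduct of the derived transcription
category recovers the original multiplication. -/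
theorem transcription_localisable_mutually_inverse :
    (∀ (C : Type*) (T : TranscriptionCategory C) (x y e : C),
      (T.tgt x = T.src y → T.otimes x y = T.comp x y) ∧
      (e = T.src e → T.otimes e x = T.ltr e x ∧ T.otimes x e = T.rtr x e)) ∧
    (∀ (S : Type*) [Semigroup S] (p m : S → S),
      (∀ x : S, p x * x = x) →
      (∀ x y : S, p (x * y) = p (x * p y)) →
      (∀ x y : S, p x * p y = p (p x * y)) →
      (∀ x : S, x * m x = x) →
      (∀ x y : S, m (x * y) = m (m x * y)) →
      (∀ x y : S, m x * m y = m (x * m y)) →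
      (∀ x : S, m (p x) = p x) →
      (∀ x : S, p (m x) = m x) →
      ∀ x y : S, m (x * p y) = p (m x * y) ∧ x * y = (x * p y) * (m x * y)) := by
  constructor
  · intro C T x y e
    have srcsrc : ∀ z : C, T.src (T.src z) = T.src z := fun z => by
      rw [← T.tgt_src z, T.src_tgt, T.tgt_src]
    constructor
    · intro h
      have h1 : T.rtr x (T.src y) = x := by rw [← h, T.rtr_tgt_self]
      have h2 : T.ltr (T.tgt x) y = y := by rw [h, T.ltr_src_self]
      unfold TranscriptionCategory.otimes
      rw [h1, h2]
    · intro he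
      constructor
      · have hte : T.tgt e = e := by
          conv_lhs => rw [he]
          rw [T.tgt_src, ← he]
        have h1 : T.rtr e (T.src x) = T.src (T.ltr e x) := by
          rw [← T.ltr_eq_rtr e (T.src x) he (srcsrc x).symm, T.src_ltr e x he]
        unfold TranscriptionCategory.otimes
        rw [hte, h1, T.comp_src]
      · have h2 : T.ltr (T.tgt x) e = T.tgt (T.rtr x e) := by
          rw [T.ltr_eq_rtr (T.tgt x) e (T.src_tgt x).symm he, ← T.tgt_rtr e x he]
        unfold TranscriptionCategory.otimes
        rw [← he, h2, T.comp_tgt]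
  · intro S _ p m hp hpb hpc hm hme hmf hmp hpm x y
    have key : m (x * p y) = m x * p y := by
      calc m (x * p y) = m (x * m (p y)) := by rw [hmp]
      _ = m x * m (p y) := (hmf _ _).symm
      _ = m x * p y := by rw [hmp]
    have key2 : p (m x * y) = m x * p y := by
      calc p (m x * y) = p (p (m x) * y) := by rw [hpm]
      _ = p (m x) * p y := (hpc _ _).symm
      _ = m x * p y := by rw [hpm]
    refine ⟨key.trans key2.symm, ?_⟩
    calc x * y = (x * m x) * y := by rw [hm]
    _ = x * (m x * y) := by rw [mul_assoc]
    _ = x * (p (m x * y) * (m x * y)) := by rw [hp]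
    _ = x * ((m x * p y) * (m x * y)) := by rw [key2]
    _ = ((x * m x) * p y) * (m x * y) := by simp only [mul_assoc]
    _ = (x * p y) * (m x * y) := by rw [hm]
end

section
/- Let S be a semigroup with unary operations ⁺,⁻ satisfying x⁺x = x, xx⁻ = x, (x⁺)⁻ = x⁺ and (x⁻)⁺ = x⁻, in which the set S⁺ = {x⁺ : x ∈ S} is closed under multiplication (S⁺S⁺ ⊆ S⁺), and suppose both ample identities xy⁺ = (xy)⁺x and x⁻y = y(xy)⁻ hold for all x,y. Then the projections commute: pq = qp for all p,q ∈ S⁺. -/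
/-- Lemma 5.1 (`cp`): let `S` be a semigroup with unary operations `⁺, ⁻`
satisfying `x⁺x = x`, `xx⁻ = x`, `(x⁺)⁻ = x⁺` and `(x⁻)⁺ = x⁻`, such that the
set of projections `S⁺ = {x⁺ : x ∈ S}` is closed under multiplication, and
suppose both ample identities `xy⁺ = (xy)⁺x` and `x⁻y = y(xy)⁻` hold.  Then the
projections commute: `pq = qp` for all `p, q ∈ S⁺`. -/
theorem ample_implies_commuting_projections {S : Type*} [Semigroup S]
    (p m : S → S)
    (ha : ∀ x : S, p x * x = x)
    (hd : ∀ x : S, x * m x = x)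
    (hg1 : ∀ x : S, m (p x) = p x)
    (hg2 : ∀ x : S, p (m x) = m x)
    (hband : ∀ x y : S, p x * p y ∈ Set.range p)
    (hample1 : ∀ x y : S, x * p y = p (x * y) * x)
    (hample2 : ∀ x y : S, m x * y = y * m (x * y)) :
    ∀ u v : S, u ∈ Set.range p → v ∈ Set.range p → u * v = v * u := by
  have hpfix : ∀ u ∈ Set.range p, p u = u := by
    rintro _ ⟨x, rfl⟩
    simpa [hg1 x] using hg2 (p x)
  have hmfix : ∀ u ∈ Set.range p, m u = u := by
    rintro _ ⟨x, rfl⟩; exact hg1 x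
  have hidem : ∀ u ∈ Set.range p, u * u = u := by
    intro u hu; nth_rewrite 1 [← hpfix u hu]; exact ha u
  have hclosed : ∀ u v : S, u ∈ Set.range p → v ∈ Set.range p →
      u * v ∈ Set.range p := by
    rintro _ _ ⟨a, rfl⟩ ⟨b, rfl⟩; exact hband a b
  have L1 : ∀ u v : S, u ∈ Set.range p → v ∈ Set.range p →
      u * v = (u * v) * u := by
    intro u v hu hv
    have h := hample1 u v
    rwa [hpfix v hv, hpfix _ (hclosed u v hu hv)] at h
  have L2 : ∀ u v : S, u ∈ Set.range p → v ∈ Set.range p →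
      u * v = v * (u * v) := by
    intro u v hu hv
    have h := hample2 u v
    rwa [hmfix u hu, hmfix _ (hclosed u v hu hv)] at h
  intro u v hu hv
  have h1 : (u * v) * (v * u) = v * u := by
    rw [mul_assoc u v, ← mul_assoc v v, hidem v hv, ← L2 v u hv hu]
  have h2 : (v * u) * (u * v) = u * v := by
    rw [mul_assoc v u, ← mul_assoc u u, hidem u hu, ← L2 u v hu hv]
  have h3 := L1 (u * v) (v * u) (hclosed u v hu hv) (hclosed v u hv hu)
  rw [h1, h2] at h3
  exact h3.symm
end

section
/- Let (S,·,⁺) be a unary semigroup. Then S is left localisable (satisfies x⁺x = x, (xy)⁺ = (xy⁺)⁺ and x⁺y⁺ = (x⁺y)⁺) with commuting projections (pq = qp for all p,q ∈ S⁺) if and only if S is left Ehresmann (satisfies x⁺x = x, (xy)⁺ = (xy⁺)⁺ and (x⁺y⁺)⁺ = x⁺y⁺ = y⁺x⁺). -/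
/-- Lemma 5.2 (`ehr`): a unary semigroup `(S, ·, ⁺)` is left localisable
(`x⁺x = x`, `(xy)⁺ = (xy⁺)⁺`, `x⁺y⁺ = (x⁺y)⁺`) with commuting projections
(`pq = qp` for all `p, q ∈ S⁺`) if and only if it is left Ehresmann
(`x⁺x = x`, `(xy)⁺ = (xy⁺)⁺`, `(x⁺y⁺)⁺ = x⁺y⁺ = y⁺x⁺`). -/
theorem left_localisable_CP_iff_left_Ehresmann {S : Type*} [Semigroup S]
    (p : S → S) :
    ((∀ x : S, p x * x = x) ∧
     (∀ x y : S, p (x * y) = p (x * p y)) ∧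
     (∀ x y : S, p x * p y = p (p x * y)) ∧
     (∀ x y : S, p x * p y = p y * p x)) ↔
    ((∀ x : S, p x * x = x) ∧
     (∀ x y : S, p (x * y) = p (x * p y)) ∧
     (∀ x y : S, p (p x * p y) = p x * p y ∧ p x * p y = p y * p x)) := by
  constructor
  · rintro ⟨a, b, c, cp⟩
    -- projections are idempotent
    have hidem : ∀ y : S, p y * p y = p y := by
      intro y
      have := c y y
      rwa [a y] at this
    -- p is idempotent on projections
    have hpp : ∀ y : S, p (p y) = p y := by
      intro y
      have h1 : p y * p (p y) = p (p y) := by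
        have := c y (p y)
        rwa [hidem y] at this
      have h2 : p (p y) * p y = p y := a (p y)
      calc p (p y) = p y * p (p y) := h1.symm
        _ = p (p y) * p y := (cp (p y) y).symm
        _ = p y := h2
    refine ⟨a, b, fun x y => ⟨?_, cp x y⟩⟩
    rw [c x y, hpp]
  · rintro ⟨a, b, e⟩
    refine ⟨a, b, fun x y => ?_, fun x y => (e x y).2⟩
    rw [← (e x y).1, ← b]
end

section
/- A semigroup (S,·,⁺,⁻) with two unary operations is a localisable semigroup with commuting projections (pq = qp for all p,q ∈ S⁺) if and only if it is an Ehresmann semigroup. -/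
/-- Corollary 5.3: a semigroup `(S, ·, ⁺, ⁻)` with two unary operations is a
localisable semigroup with commuting projections (`pq = qp` for all
`p, q ∈ S⁺`) if and only if it is an Ehresmann semigroup (left and right
Ehresmann with `(x⁺)⁻ = x⁺` and `(x⁻)⁺ = x⁻`). -/
theorem localisable_CP_iff_Ehresmann {S : Type*} [Semigroup S] (p m : S → S) :
    -- localisable with commuting projections
    ((∀ x : S, p x * x = x) ∧
     (∀ x y : S, p (x * y) = p (x * p y)) ∧
     (∀ x y : S, p x * p y = p (p x * y)) ∧
     (∀ x : S, x * m x = x) ∧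
     (∀ x y : S, m (x * y) = m (m x * y)) ∧
     (∀ x y : S, m x * m y = m (x * m y)) ∧
     (∀ x : S, m (p x) = p x) ∧ (∀ x : S, p (m x) = m x) ∧
     (∀ x y : S, p x * p y = p y * p x)) ↔
    -- Ehresmann: left Ehresmann, right Ehresmann, and the linking identities
    ((∀ x : S, p x * x = x) ∧
     (∀ x y : S, p (x * y) = p (x * p y)) ∧
     (∀ x y : S, p (p x * p y) = p x * p y ∧ p x * p y = p y * p x) ∧
     (∀ x : S, x * m x = x) ∧
     (∀ x y : S, m (x * y) = m (m x * y)) ∧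
     (∀ x y : S, m (m x * m y) = m x * m y ∧ m x * m y = m y * m x) ∧
     (∀ x : S, m (p x) = p x) ∧ (∀ x : S, p (m x) = m x)) := by
  constructor
  · rintro ⟨ha, hb, hc, hd, he, hf, hg1, hg2, hcp⟩
    have hpp : ∀ x : S, p (p x) = p x := fun x => by rw [← hg1 x, hg2, hg1]
    have hmm : ∀ x : S, m (m x) = m x := fun x => by rw [← hg2 x, hg1, hg2]
    refine ⟨ha, hb, fun x y => ⟨?_, hcp x y⟩, hd, he, fun x y => ⟨?_, ?_⟩, hg1, hg2⟩
    · rw [← hc x (p y), hpp]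
    · rw [← hf (m x) y, hmm]
    · rw [← hg2 x, ← hg2 y, hcp]
  · rintro ⟨ha, hb, hc, hd, he, hf, hg1, hg2⟩
    refine ⟨ha, hb, fun x y => ?_, hd, he, fun x y => ?_, hg1, hg2,
      fun x y => (hc x y).2⟩
    · calc p x * p y = p (p x * p y) := ((hc x y).1).symm
        _ = p (p x * y) := (hb (p x) y).symm
    · calc m x * m y = m (m x * m y) := ((hf x y).1).symm
        _ = m (x * m y) := (he x (m y)).symm
end

section
/- Let (S,·,⁺) be a left localisable semigroup and define s ≤̃_R t to mean: for all p ∈ S⁺, pt = t implies ps = s. Then for all s,t ∈ S the following are equivalent: (i) s ≤̃_R t; (ii) s⁺ ≤̃_R t⁺; (iii) t⁺s⁺ = s⁺; (iv) s = t⁺s. -/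
/-- Lemma 6.1 (`TFAE`): in a left localisable semigroup `(S, ·, ⁺)`, with
`s ≤̃_R t` meaning that `pt = t` implies `ps = s` for all `p ∈ S⁺`, the
following are equivalent: (i) `s ≤̃_R t`; (ii) `s⁺ ≤̃_R t⁺`;
(iii) `t⁺s⁺ = s⁺`; (iv) `s = t⁺s`. -/
theorem tilde_leR_tfae {S : Type*} [Semigroup S] (p : S → S)
    (ha : ∀ x : S, p x * x = x)
    (hb : ∀ x y : S, p (x * y) = p (x * p y))
    (hc : ∀ x y : S, p x * p y = p (p x * y))
    (leR : S → S → Prop)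
    (hle : ∀ s t : S, leR s t ↔ ∀ q ∈ Set.range p, q * t = t → q * s = s)
    (s t : S) :
    [leR s t, leR (p s) (p t), p t * p s = p s, s = p t * s].TFAE := by
  have idem : ∀ x : S, p x * p x = p x := fun x => by rw [hc, ha]
  tfae_have 1 → 4 := by
    intro h
    exact ((hle s t).1 h (p t) ⟨t, rfl⟩ (ha t)).symm
  tfae_have 4 → 3 := by
    intro h
    rw [hc, ← h]
  tfae_have 3 → 2 := by
    intro h
    rw [hle]
    rintro q ⟨u, rfl⟩ hq
    calc p u * p s = p u * (p t * p s) := by rw [h]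
    _ = (p u * p t) * p s := (mul_assoc _ _ _).symm
    _ = p t * p s := by rw [hq]
    _ = p s := h
  tfae_have 2 → 1 := by
    intro h
    have h3 : p t * p s = p s := (hle (p s) (p t)).1 h (p t) ⟨t, rfl⟩ (idem t)
    have h4 : s = p t * s := by
      conv_lhs => rw [← ha s, ← h3, mul_assoc, ha s]
    rw [hle]
    rintro q ⟨u, rfl⟩ hq
    have : p u * p t = p t := by rw [hc, hq]
    calc p u * s = p u * (p t * s) := by rw [← h4]
    _ = (p u * p t) * s := (mul_assoc _ _ _).symm
    _ = p t * s := by rw [this]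
    _ = s := h4.symm
  tfae_finish
end

section
/- Let (S,·,⁺) be a left localisable semigroup. For all s,t,u ∈ S, if s ≤̃_R t then us ≤̃_R ut. Consequently the relation R̃ = ≤̃_R ∩ (≤̃_R)⁻¹ is a left congruence on S. -/
/-- Corollary 6.2: in a left localisable semigroup, `s ≤̃_R t` implies
`us ≤̃_R ut`, and consequently the symmetrisation `R̃` of `≤̃_R` is a left
congruence on `S`. -/
theorem tilde_R_left_congruence {S : Type*} [Semigroup S] (p : S → S)
    (ha : ∀ x : S, p x * x = x)
    (hb : ∀ x y : S, p (x * y) = p (x * p y))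
    (hc : ∀ x y : S, p x * p y = p (p x * y))
    (leR : S → S → Prop)
    (hle : ∀ s t : S, leR s t ↔ ∀ q ∈ Set.range p, q * t = t → q * s = s) :
    (∀ s t u : S, leR s t → leR (u * s) (u * t)) ∧
    (Equivalence (fun s t : S => leR s t ∧ leR t s) ∧
      ∀ u s t : S, (leR s t ∧ leR t s) →
        (leR (u * s) (u * t) ∧ leR (u * t) (u * s))) := by
  have key : ∀ s t u : S, leR s t → leR (u * s) (u * t) := by
    intro s t u hst
    rw [hle]
    rintro q ⟨x, rfl⟩ hq
    have hpts : p t * s = s := (hle s t).mp hst (p t) ⟨t, rfl⟩ (ha t)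
    have h1 : p x * p (u * t) = p (u * t) := by
      rw [hc x (u * t), hq]
    have h2 : p (u * p t) = p (u * t) := (hb u t).symm
    have h3 : p x * (u * p t) = u * p t := by
      calc p x * (u * p t) = p x * (p (u * p t) * (u * p t)) := by rw [ha]
        _ = p x * (p (u * t) * (u * p t)) := by rw [h2]
        _ = (p x * p (u * t)) * (u * p t) := by rw [mul_assoc]
        _ = p (u * t) * (u * p t) := by rw [h1]
        _ = p (u * p t) * (u * p t) := by rw [h2]
        _ = u * p t := ha _
    calc p x * (u * s) = p x * (u * (p t * s)) := by rw [hpts]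
      _ = (p x * (u * p t)) * s := by rw [← mul_assoc, ← mul_assoc, mul_assoc (p x)]
      _ = (u * p t) * s := by rw [h3]
      _ = u * (p t * s) := by rw [mul_assoc]
      _ = u * s := by rw [hpts]
  refine ⟨key, ⟨?_, ?_, ?_⟩, fun u s t h => ⟨key s t u h.1, key t s u h.2⟩⟩
  · intro s
    have : leR s s := (hle s s).mpr fun q _ h => h
    exact ⟨this, this⟩
  · exact fun h => ⟨h.2, h.1⟩
  · intro a b c hab hbc
    obtain ⟨h1, h2⟩ := hab
    obtain ⟨h3, h4⟩ := hbc
    constructor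
    · exact (hle _ _).mpr fun q hq ht => (hle _ _).mp h1 q hq ((hle _ _).mp h3 q hq ht)
    · exact (hle _ _).mpr fun q hq ht => (hle _ _).mp h4 q hq ((hle _ _).mp h2 q hq ht)
end

section
/- Let (S,·,⁺,⁻) be a localisable semigroup and define s ⊴ t to mean s = s⁺t and s = ts⁻. Then ⊴ is a partial order on S (reflexive, transitive, antisymmetric); it is contained in the natural Mitsch partial order ≤_M (s ≤_M t iff s = t or there exist x,y ∈ S with s = xt = ty = xty); and restricted to elements s,t with s = s⁺ = s⁻, one has s ⊴ t if and only if s = st = ts. -/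
/-- Lemma 8.2: in a localisable semigroup `(S, ·, ⁺, ⁻)`, the relation
`s ⊴ t ↔ (s = s⁺t ∧ s = ts⁻)` is a partial order on `S`, is contained in the
natural Mitsch partial order (`s ≤_M t` iff `s = t` or `s = xt = ty = xty` for
some `x, y ∈ S`), and for `s` with `s = s⁺ = s⁻` one has
`s ⊴ t ↔ (s = st ∧ s = ts)`. -/
theorem localisable_order {S : Type*} [Semigroup S] (p m : S → S)
    (ha : ∀ x : S, p x * x = x)
    (hb : ∀ x y : S, p (x * y) = p (x * p y))
    (hc : ∀ x y : S, p x * p y = p (p x * y))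
    (hd : ∀ x : S, x * m x = x)
    (he : ∀ x y : S, m (x * y) = m (m x * y))
    (hf : ∀ x y : S, m x * m y = m (x * m y))
    (hg1 : ∀ x : S, m (p x) = p x)
    (hg2 : ∀ x : S, p (m x) = m x)
    (unlhd : S → S → Prop)
    (hunlhd : ∀ s t : S, unlhd s t ↔ (s = p s * t ∧ s = t * m s)) :
    -- ⊴ is a partial order
    (∀ s : S, unlhd s s) ∧
    (∀ s t u : S, unlhd s t → unlhd t u → unlhd s u) ∧
    (∀ s t : S, unlhd s t → unlhd t s → s = t) ∧
    -- ⊴ is contained in the Mitsch natural partial order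
    (∀ s t : S, unlhd s t →
      (s = t ∨ ∃ x y : S, s = x * t ∧ s = t * y ∧ s = x * t * y)) ∧
    -- on projections it coincides with the Mitsch order:
    (∀ s t : S, s = p s → s = m s → (unlhd s t ↔ (s = s * t ∧ s = t * s))) := by
  refine ⟨?_, ?_, ?_, ?_, ?_⟩
  · intro s
    exact (hunlhd s s).mpr ⟨(ha s).symm, (hd s).symm⟩
  · intro s t u hst htu
    obtain ⟨h1, h2⟩ := (hunlhd s t).mp hst
    obtain ⟨h3, h4⟩ := (hunlhd t u).mp htu
    -- p s * p t = p s
    have hpp : p s * p t = p s := by rw [hc, ← h1]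
    have hmm : m t * m s = m s := by rw [hf, ← h2]
    refine (hunlhd s u).mpr ⟨?_, ?_⟩
    · calc s = p s * t := h1
        _ = p s * (p t * u) := by rw [← h3]
        _ = (p s * p t) * u := (mul_assoc _ _ _).symm
        _ = p s * u := by rw [hpp]
    · calc s = t * m s := h2
        _ = (u * m t) * m s := by rw [← h4]
        _ = u * (m t * m s) := mul_assoc _ _ _
        _ = u * m s := by rw [hmm]
  · intro s t hst hts
    obtain ⟨h1, h2⟩ := (hunlhd s t).mp hst
    obtain ⟨h3, h4⟩ := (hunlhd t s).mp hts
    symm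
    calc t = p t * s := h3
      _ = p t * (t * m s) := by rw [← h2]
      _ = (p t * t) * m s := (mul_assoc _ _ _).symm
      _ = t * m s := by rw [ha]
      _ = s := h2.symm
  · intro s t hst
    obtain ⟨h1, h2⟩ := (hunlhd s t).mp hst
    refine Or.inr ⟨p s, m s, h1, h2, ?_⟩
    calc s = s * m s := (hd s).symm
      _ = (p s * t) * m s := by rw [← h1]
  · intro s t hp hm
    rw [hunlhd, ← hp, ← hm]
end

section
/- Let (S,·,⁺,⁻) be a localisable semigroup, let μ be the relation on S given by (s,t) ∈ μ iff s⁺ = t⁺, s⁻ = t⁻, and for all p ∈ S⁺ one has (sp)⁺ = (tp)⁺ and (ps)⁻ = (pt)⁻, and let θ be a ±-congruence on S. Then θ is projection-separating (p,q ∈ S⁺ and (p,q) ∈ θ imply p = q) if and only if θ ⊆ μ. -/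
/-- Lemma 8.6: let `(S, ·, ⁺, ⁻)` be a localisable semigroup, `μ` the relation
given by `(s,t) ∈ μ` iff `s⁺ = t⁺`, `s⁻ = t⁻`, `(sp)⁺ = (tp)⁺` and
`(ps)⁻ = (pt)⁻` for all `p ∈ S⁺`, and `θ` a `±`-congruence on `S`.  Then `θ`
is projection-separating if and only if `θ ⊆ μ`. -/
theorem projection_separating_iff_sub_mu {S : Type*} [Semigroup S] (p m : S → S)
    (ha : ∀ x : S, p x * x = x)
    (hb : ∀ x y : S, p (x * y) = p (x * p y))
    (hc : ∀ x y : S, p x * p y = p (p x * y))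
    (hd : ∀ x : S, x * m x = x)
    (he : ∀ x y : S, m (x * y) = m (m x * y))
    (hf : ∀ x y : S, m x * m y = m (x * m y))
    (hg1 : ∀ x : S, m (p x) = p x)
    (hg2 : ∀ x : S, p (m x) = m x)
    (μ : S → S → Prop)
    (hμ : ∀ s t : S, μ s t ↔ (p s = p t ∧ m s = m t ∧
      ∀ q ∈ Set.range p, p (s * q) = p (t * q) ∧ m (q * s) = m (q * t)))
    (θ : S → S → Prop)
    (hequiv : Equivalence θ)
    (hcong : ∀ a b c d : S, θ a b → θ c d → θ (a * c) (b * d))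
    (hpm : ∀ a b : S, θ a b → θ (p a) (p b) ∧ θ (m a) (m b)) :
    (∀ u v : S, u ∈ Set.range p → v ∈ Set.range p → θ u v → u = v) ↔
      (∀ s t : S, θ s t → μ s t) := by
  have hpp : ∀ x : S, p (p x) = p x := fun x => by
    rw [← hg1 x, hg2, hg1]
  have hmr : ∀ x : S, m x ∈ Set.range p := fun x => ⟨m x, hg2 x⟩
  have hpr : ∀ x : S, p x ∈ Set.range p := fun x => ⟨x, rfl⟩
  constructor
  · intro hsep s t hst
    rw [hμ]
    refine ⟨hsep _ _ (hpr s) (hpr t) (hpm _ _ hst).1,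
      hsep _ _ (hmr s) (hmr t) (hpm _ _ hst).2, ?_⟩
    intro q hq
    have hqq : θ q q := hequiv.refl q
    exact ⟨hsep _ _ (hpr _) (hpr _) (hpm _ _ (hcong _ _ _ _ hst hqq)).1,
      hsep _ _ (hmr _) (hmr _) (hpm _ _ (hcong _ _ _ _ hqq hst)).2⟩
  · intro hsub u v hu hv huv
    obtain ⟨x, rfl⟩ := hu
    obtain ⟨y, rfl⟩ := hv
    have := ((hμ _ _).mp (hsub _ _ huv)).1
    rwa [hpp, hpp] at this
end

section
/- Let (S,·,*) be a regular unary semigroup (xx*x = x and x*xx* = x* for all x). Then the operation * fixes every idempotent of S (e² = e implies e* = e) if and only if the identity (x(xx)*x)* = x(xx)*x holds for all x ∈ S. -/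
/-- Lemma 9.3 (`Lem:idem_fix`): in a regular unary semigroup `(S, ·, *)`
(satisfying `xx*x = x` and `x*xx* = x*`), the operation `*` fixes every
idempotent of `S` if and only if the identity `(x(xx)*x)* = x(xx)*x` holds. -/
theorem star_fixes_idempotents_iff {S : Type*} [Semigroup S] (star : S → S)
    (h1 : ∀ x : S, x * star x * x = x)
    (h2 : ∀ x : S, star x * x * star x = star x) :
    (∀ e : S, e * e = e → star e = e) ↔
      (∀ x : S, star (x * star (x * x) * x) = x * star (x * x) * x) := by
  constructor
  · intro hf x
    apply hf
    have key : star (x * x) * (x * x) * star (x * x) = star (x * x) := h2 (x * x)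
    calc x * star (x * x) * x * (x * star (x * x) * x)
        = x * (star (x * x) * (x * x) * star (x * x)) * x := by
          simp only [mul_assoc]
      _ = x * star (x * x) * x := by rw [key]
  · intro hid e he
    have := hid e
    rw [he] at this
    rwa [h1 e] at this
end

section
/- Let (S,·,*) be a *-localisable semigroup. Then: (1) x** = x for all x ∈ S; (2) if e ∈ S satisfies (e*)² = e*, then e* = e. -/
/-- Lemma 9.4 (`Lem:*-fix`): let `(S, ·, *)` be a `*`-localisable semigroup,
i.e. a regular unary semigroup (`xx*x = x`, `x*xx* = x*`) additionally
satisfying `(x(xx)*x)* = x(xx)*x`, `x(xyy*)* = xy(xy)*` and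
`(x*xy)*y = (xy)*xy`.  Then (1) `x** = x` for all `x ∈ S`, and (2) every
`e ∈ S` with `(e*)² = e*` satisfies `e* = e`. -/
theorem star_localisable_involution {S : Type*} [Semigroup S] (star : S → S)
    (h1 : ∀ x : S, x * star x * x = x)
    (h2 : ∀ x : S, star x * x * star x = star x)
    (h3 : ∀ x : S, star (x * star (x * x) * x) = x * star (x * x) * x)
    (h4 : ∀ x y : S, x * star (x * y * star y) = x * y * star (x * y))
    (h5 : ∀ x y : S, star (star x * x * y) * y = star (x * y) * (x * y)) :
    (∀ x : S, star (star x) = x) ∧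
    (∀ e : S, star e * star e = star e → star e = e) := by
  -- every idempotent is fixed by star
  have idem : ∀ g : S, g * g = g → star g = g := by
    intro g hg
    have h := h3 g
    rw [hg, h1 g] at h
    exact h
  -- x x* is idempotent, hence star-fixed
  have e_fix : ∀ x : S, star (x * star x) = x * star x := by
    intro x
    refine idem _ ?_
    calc x * star x * (x * star x) = x * star x * x * star x := by
          rw [mul_assoc (x * star x) x (star x)]
      _ = x * star x := by rw [h1 x]
  -- x* x is idempotent, hence star-fixed
  have f_fix : ∀ x : S, star (star x * x) = star x * x := by
    intro x
    refine idem _ ?_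
    calc star x * x * (star x * x) = star x * x * star x * x := by
          rw [mul_assoc (star x * x) (star x) x]
      _ = star x * x := by rw [h2 x]
  -- x** x* = x x*
  have key1 : ∀ x : S, star (star x) * star x = x * star x := by
    intro x
    have h := h5 x (star x)
    rw [h2 x, e_fix x] at h
    calc star (star x) * star x = x * star x * (x * star x) := h
      _ = x * star x * x * star x := by rw [mul_assoc (x * star x) x (star x)]
      _ = x * star x := by rw [h1 x]
  -- x* x** = x* x
  have key2 : ∀ x : S, star x * star (star x) = star x * x := by
    intro x
    have h := h4 (star x) x
    rw [h2 x, f_fix x] at h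
    calc star x * star (star x) = star x * x * (star x * x) := h
      _ = star x * x * star x * x := by rw [mul_assoc (star x * x) (star x) x]
      _ = star x * x := by rw [h2 x]
  have inv : ∀ x : S, star (star x) = x := by
    intro x
    calc star (star x)
        = star (star x) * star x * star (star x) := (h2 (star x)).symm
      _ = x * star x * star (star x) := by rw [key1 x]
      _ = x * (star x * star (star x)) := by rw [mul_assoc]
      _ = x * (star x * x) := by rw [key2 x]
      _ = x * star x * x := by rw [mul_assoc]
      _ = x := h1 x
  refine ⟨inv, fun e he => ?_⟩
  have := idem (star e) he
  calc star e = star (star e) := this.symm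
    _ = e := inv e
end

section
/- Let (S,·,*) be a *-localisable semigroup and define x⁺ = xx* and x⁻ = x*x. Then (S,·,⁺,⁻) is a localisable semigroup. Conversely, let (S,·,⁺,⁻) be a localisable semigroup which is regular, and suppose there is a map * : S → S such that xx*x = x, x*xx* = x*, x⁺ = xx* and x⁻ = x*x for all x ∈ S. Then (S,·,*) is *-localisable. -/
/-- Theorem 9.5 (`slisl`): if `(S, ·, *)` is a `*`-localisable semigroup and
`x⁺ = xx*`, `x⁻ = x*x`, then `(S, ·, ⁺, ⁻)` is a localisable semigroup.
Conversely, if `(S, ·, ⁺, ⁻)` is a regular localisable semigroup admitting a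
map `* : S → S` with `xx*x = x`, `x*xx* = x*`, `x⁺ = xx*` and `x⁻ = x*x`, then
`(S, ·, *)` is `*`-localisable. -/
theorem star_localisable_iff_localisable :
    -- forward direction
    (∀ (S : Type*) [Semigroup S] (star : S → S),
      (∀ x : S, x * star x * x = x) →
      (∀ x : S, star x * x * star x = star x) →
      (∀ x : S, star (x * star (x * x) * x) = x * star (x * x) * x) →
      (∀ x y : S, x * star (x * y * star y) = x * y * star (x * y)) →
      (∀ x y : S, star (star x * x * y) * y = star (x * y) * (x * y)) →
      (∀ x : S, (x * star x) * x = x) ∧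
      (∀ x y : S, (x * y) * star (x * y) = (x * (y * star y)) * star (x * (y * star y))) ∧
      (∀ x y : S, (x * star x) * (y * star y) =
        ((x * star x) * y) * star ((x * star x) * y)) ∧
      (∀ x : S, x * (star x * x) = x) ∧
      (∀ x y : S, star (x * y) * (x * y) =
        star ((star x * x) * y) * ((star x * x) * y)) ∧
      (∀ x y : S, (star x * x) * (star y * y) =
        star (x * (star y * y)) * (x * (star y * y))) ∧
      (∀ x : S, star (x * star x) * (x * star x) = x * star x) ∧
      (∀ x : S, (star x * x) * star (star x * x) = star x * x)) ∧
    -- converse direction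
    (∀ (S : Type*) [Semigroup S] (p m star : S → S),
      (∀ x : S, p x * x = x) →
      (∀ x y : S, p (x * y) = p (x * p y)) →
      (∀ x y : S, p x * p y = p (p x * y)) →
      (∀ x : S, x * m x = x) →
      (∀ x y : S, m (x * y) = m (m x * y)) →
      (∀ x y : S, m x * m y = m (x * m y)) →
      (∀ x : S, m (p x) = p x) →
      (∀ x : S, p (m x) = m x) →
      (∀ x : S, ∃ y : S, x * y * x = x) →
      (∀ x : S, x * star x * x = x) →
      (∀ x : S, star x * x * star x = star x) →
      (∀ x : S, p x = x * star x) →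
      (∀ x : S, m x = star x * x) →
      (∀ x : S, star (x * star (x * x) * x) = x * star (x * x) * x) ∧
      (∀ x y : S, x * star (x * y * star y) = x * y * star (x * y)) ∧
      (∀ x y : S, star (star x * x * y) * y = star (x * y) * (x * y))) := by
  constructor
  · -- FORWARD DIRECTION
    intro S _ star h1 h2 hA1 hA2 hA3
    have idem_star : ∀ z : S, z * z = z → star z = z := by
      intro z hz
      have h := hA1 z
      rw [hz, h1 z] at h
      exact h
    have pp_idem : ∀ x : S, (x * star x) * (x * star x) = x * star x := by
      intro x; rw [← mul_assoc, h1]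
    have mm_idem : ∀ x : S, (star x * x) * (star x * x) = star x * x := by
      intro x; rw [← mul_assoc, h2]
    have lemb : ∀ x y : S, (x * y) * star (x * y)
        = (x * (y * star y)) * star (x * (y * star y)) := by
      intro x y
      have hse : star (y * star y) = y * star y := idem_star _ (pp_idem y)
      have h2' := hA2 x (y * star y)
      rw [hse] at h2'
      have harg : x * (y * star y) * (y * star y) = x * (y * star y) := by
        rw [mul_assoc, pp_idem]
      rw [harg] at h2'
      have h2x := hA2 x y
      rw [mul_assoc x y (star y)] at h2x
      exact h2x.symm.trans h2'
    have leme : ∀ x y : S, star (x * y) * (x * y)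
        = star ((star x * x) * y) * ((star x * x) * y) := by
      intro x y
      have hsf : star (star x * x) = star x * x := idem_star _ (mm_idem x)
      have h3f := hA3 (star x * x) y
      rw [hsf] at h3f
      have harg : (star x * x) * (star x * x) * y = (star x * x) * y := by
        rw [mm_idem]
      rw [harg] at h3f
      exact (hA3 x y).symm.trans h3f
    have prod_idem : ∀ e f : S, e * e = e → f * f = f →
        (e * f) * (e * f) = e * f := by
      intro e f he hf
      have hse : star e = e := idem_star e he
      have hsf : star f = f := idem_star f hf
      set g := e * f with hgdef
      set s := star g with hsdef
      have S1 : e * s = g * s := by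
        have h := hA2 e f
        rw [hsf] at h
        have harg : e * f * f = e * f := by rw [mul_assoc, hf]
        rw [harg] at h
        exact h
      have S2 : s * f = s * g := by
        have h := hA3 e f
        rw [hse, he] at h
        exact h
      have hgsg : g * s * g = g := h1 g
      have hsgs : s * g * s = s := h2 g
      have huu : (g * s) * (g * s) = g * s := by rw [← mul_assoc, hgsg]
      have hvv : (s * g) * (s * g) = s * g := by rw [← mul_assoc, hsgs]
      have hsu : s * (g * s) = s := by rw [← mul_assoc, hsgs]
      have hsfs : s * (f * s) = s := by rw [← mul_assoc, S2, hsgs]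
      have hll : (f * s) * (f * s) = f * s := by rw [mul_assoc, hsfs]
      have hese : e * (s * e) = (g * s) * e := by rw [← mul_assoc, S1]
      have hkk : (s * e) * (s * e) = s * e := by
        rw [mul_assoc, hese, ← mul_assoc, hsu]
      have hustar : star (g * s) = g * s := idem_star _ huu
      have hvstar : star (s * g) = s * g := idem_star _ hvv
      have hlstar : star (f * s) = f * s := idem_star _ hll
      have hkstar : star (s * e) = s * e := idem_star _ hkk
      have hgf : g * f = g := by rw [hgdef, mul_assoc, hf]
      have hgl : g * (f * s) = g * s := by rw [← mul_assoc, hgf]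
      have heg : e * g = g := by rw [hgdef, ← mul_assoc, he]
      have hkg : (s * e) * g = s * g := by rw [mul_assoc, heg]
      have S11 : g * (g * s) = g * s := by
        have h := hA2 g (f * s)
        rw [hlstar] at h
        have harg : g * (f * s) * (f * s) = g * s := by
          rw [hgl, mul_assoc, hsfs]
        rw [harg, hgl, hustar, huu] at h
        exact h
      have S12 : (s * g) * g = s * g := by
        have h := hA3 (s * e) g
        rw [hkstar, hkk, hkg, hvstar, hvv] at h
        exact h
      have S13 : star (g * g) * (g * g) = s * g := by
        have h := leme g g
        rw [← hsdef, S12, hvstar, hvv] at h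
        exact h
      have e4 : (g * g) * (star (g * g) * (g * g)) = g * g := by
        have h := h1 (g * g)
        rw [mul_assoc] at h
        exact h
      have final : g = g * g := by
        calc g = (g * (g * s)) * g := by rw [S11, hgsg]
        _ = (g * g) * (s * g) := by rw [← mul_assoc g g s, mul_assoc]
        _ = (g * g) * (star (g * g) * (g * g)) := by rw [S13]
        _ = g * g := e4
      exact final.symm
    refine ⟨fun x => h1 x, lemb, ?_, ?_, leme, ?_, ?_, ?_⟩
    · -- (c)
      intro x y
      have hg := prod_idem _ _ (pp_idem x) (pp_idem y)
      have hsg := idem_star _ hg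
      have hb := lemb (x * star x) y
      rw [hb, hsg, hg]
    · -- (d)
      intro x
      rw [← mul_assoc]; exact h1 x
    · -- (f)
      intro x y
      have hg := prod_idem _ _ (mm_idem x) (mm_idem y)
      have hsg := idem_star _ hg
      have he_ := leme x (star y * y)
      rw [he_, hsg, hg]
    · -- (g)
      intro x
      rw [idem_star _ (pp_idem x)]; exact pp_idem x
    · -- (h)
      intro x
      rw [idem_star _ (mm_idem x)]; exact mm_idem x
  · -- CONVERSE DIRECTION
    intro S _ p m star ha hb hc hd he hf hmp hpm _hreg hs1 hs2 hp hm
    refine ⟨?_, ?_, ?_⟩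
    · -- A1
      intro x
      have S1 : (x * star (x * x) * x) * (x * star (x * x) * x)
          = x * star (x * x) * x := by
        have hq := hs2 (x * x)
        simp only [mul_assoc] at hq ⊢
        have key := congrArg (· * x) hq
        simp only [mul_assoc] at key
        rw [key]
      generalize hz : x * star (x * x) * x = z at S1 ⊢
      -- now: z*z = z, goal star z = z
      have S2 : (star z * z) * (z * star z) = star z := by
        rw [← mul_assoc, mul_assoc (star z) z z, S1, hs2]
      have S3 : (star z * z) * (z * star z) = z * star z := by
        have hmP : m (p z) = p z := hmp z
        have h := hf z (p z)
        rw [hmP] at h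
        have hzP : z * p z = p z := by rw [hp z, ← mul_assoc, S1]
        rw [hzP, hmP] at h
        rw [hm z, hp z] at h
        exact h
      have S4 : (star z * z) * (z * star z) = star z * z := by
        have hpM : p (m z) = m z := hpm z
        have h := hc (m z) z
        rw [hpM] at h
        have hMz : m z * z = m z := by rw [hm z, mul_assoc, S1]
        rw [hMz, hpM] at h
        rw [hm z, hp z] at h
        exact h
      have hPZ : z * star z = star z := S3.symm.trans S2
      have hMZ : star z * z = star z := S4.symm.trans S2
      have hz' := ha z
      rw [hp z, hPZ] at hz'
      exact hMZ.symm.trans hz'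
    · -- A2
      intro x y
      have harg : x * y * star y = x * p y := by rw [hp y, ← mul_assoc]
      rw [harg]
      have hme : m (p y) = p y := hmp y
      have h1' := hf x (p y)
      rw [hme] at h1'
      have h2' : m (x * p y) * star (x * p y) = star (x * p y) := by
        have h := hs2 (x * p y)
        rw [← hm (x * p y)] at h
        exact h
      calc x * star (x * p y)
          = x * (m (x * p y) * star (x * p y)) := by rw [h2']
        _ = x * ((m x * p y) * star (x * p y)) := by rw [← h1']
        _ = ((x * m x) * p y) * star (x * p y) := by rw [← mul_assoc, ← mul_assoc]
        _ = (x * p y) * star (x * p y) := by rw [hd]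
        _ = p (x * p y) := (hp _).symm
        _ = p (x * y) := (hb x y).symm
        _ = x * y * star (x * y) := hp (x * y)
    · -- A3
      intro x y
      have harg : star x * x * y = m x * y := by rw [hm x]
      rw [harg]
      have hpM : p (m x) = m x := hpm x
      have h1' := hc (m x) y
      rw [hpM] at h1'
      have h2' : star (m x * y) * p (m x * y) = star (m x * y) := by
        have h := hs2 (m x * y)
        rw [mul_assoc, ← hp (m x * y)] at h
        exact h
      calc star (m x * y) * y
          = (star (m x * y) * p (m x * y)) * y := by rw [h2']
        _ = (star (m x * y) * (m x * p y)) * y := by rw [← h1']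
        _ = star (m x * y) * (m x * (p y * y)) := by rw [mul_assoc, mul_assoc]
        _ = star (m x * y) * (m x * y) := by rw [ha y]
        _ = m (m x * y) := (hm _).symm
        _ = m (x * y) := (he x y).symm
        _ = star (x * y) * (x * y) := hm (x * y)
end

section
/- Let (S,·,*) be a *-localisable semigroup, with projections given by x⁺ = xx* and x⁻ = x*x. Then every idempotent of S is a projection: if x² = x then x = x⁺ = x⁻ (i.e. x = xx* = x*x). Consequently the idempotents of S form a band (S is orthodox): the product of any two idempotents is idempotent. -/
/-- Proposition 9.7 (`ECES`): in a `*`-localisable semigroup `(S, ·, *)` with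
projections `x⁺ = xx*` and `x⁻ = x*x`, every idempotent is a projection:
`x² = x` implies `x = xx* = x*x`.  Consequently `S` is orthodox: the product
of any two idempotents is idempotent. -/
theorem star_localisable_idempotents_are_projections {S : Type*} [Semigroup S]
    (star : S → S)
    (h1 : ∀ x : S, x * star x * x = x)
    (h2 : ∀ x : S, star x * x * star x = star x)
    (h3 : ∀ x : S, star (x * star (x * x) * x) = x * star (x * x) * x)
    (h4 : ∀ x y : S, x * star (x * y * star y) = x * y * star (x * y))
    (h5 : ∀ x y : S, star (star x * x * y) * y = star (x * y) * (x * y)) :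
    (∀ x : S, x * x = x → x = x * star x ∧ x = star x * x) ∧
    (∀ e f : S, e * e = e → f * f = f → (e * f) * (e * f) = e * f) := by
  -- Every idempotent is fixed by `star`.
  have proj : ∀ x : S, x * x = x → star x = x := by
    intro x hx
    have h := h3 x
    rw [hx, h1 x] at h
    exact h
  constructor
  · intro x hx
    rw [proj x hx]
    exact ⟨hx.symm, hx.symm⟩
  · intro e f he hf
    have hse : star e = e := proj e he
    have hsf : star f = f := proj f hf
    set g := star (e * f) with hg
    -- A : (e*f)*g = e*g
    have hA : e * f * g = e * g := by
      have h := h4 e f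
      rw [hsf, mul_assoc e f f, hf] at h
      exact h.symm
    -- B : g*(e*f) = g*f
    have hB : g * (e * f) = g * f := by
      have h := h5 e f
      rw [hse, he] at h
      exact h.symm
    have h1ef : e * f * g * (e * f) = e * f := h1 (e * f)
    have h2ef : g * (e * f) * g = g := h2 (e * f)
    -- e*f = e*g*f
    have hefg : e * f = e * g * f := by
      calc e * f = e * f * g * (e * f) := h1ef.symm
        _ = e * g * (e * f) := by rw [hA]
        _ = e * (g * (e * f)) := by rw [mul_assoc]
        _ = e * (g * f) := by rw [hB]
        _ = e * g * f := by rw [mul_assoc]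
    -- g = g*(e*g)
    have hgeg : g * (e * g) = g := by
      calc g * (e * g) = g * (e * f * g) := by rw [hA]
        _ = g * (e * f) * g := by simp only [mul_assoc]
        _ = g := h2ef
    -- (g*f) is idempotent
    have hgf : (g * f) * (g * f) = g * f := by
      calc (g * f) * (g * f) = g * (e * f) * (g * (e * f)) := by rw [hB]
        _ = g * (e * f * g * (e * f)) := by simp only [mul_assoc]
        _ = g * (e * f) := by rw [h1ef]
        _ = g * f := hB
    -- (e*g) is idempotent
    have heg : (e * g) * (e * g) = e * g := by
      calc (e * g) * (e * g) = e * f * g * (e * f * g) := by rw [hA]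
        _ = e * f * g * (e * f) * g := by simp only [mul_assoc]
        _ = e * f * g := by rw [h1ef]
        _ = e * g := hA
    -- e*g*g = e*g
    have hegg : e * g * g = e * g := by
      have h := h4 (e * g) f
      rw [hsf, mul_assoc (e * g) f f, hf] at h
      -- h : e * g * star (e * g * f) = e * g * f * star (e * g * f)
      have hx : e * g * f = e * f := hefg.symm
      rw [hx] at h
      rw [← hg] at h
      calc e * g * g = e * g * star (e * f) := by rw [hg]
        _ = e * f * star (e * f) := h
        _ = e * f * g := by rw [hg]
        _ = e * g := hA
    -- g*g = g
    have hgg : g * g = g := by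
      calc g * g = g * (e * g) * g := by rw [hgeg]
        _ = g * (e * g * g) := by simp only [mul_assoc]
        _ = g * (e * g) := by rw [hegg]
        _ = g := hgeg
    have hsg : star g = g := proj g hgg
    have hsgf : star (g * f) = g * f := proj _ hgf
    have hseg : star (e * g) = e * g := proj _ heg
    -- g = g*f
    have h4a : g = g * f := by
      have h := h4 g (e * f)
      rw [← hg, h2ef, hsg, hgg, hB, hsgf, hgf] at h
      exact h
    -- g = e*g
    have h4b : g = e * g := by
      have h := h5 (e * f) g
      rw [← hg, h2ef, hsg, hgg, hA, hseg, heg] at h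
      exact h
    -- e*f = g
    have key : e * f = g := by
      calc e * f = e * g * f := hefg
        _ = e * (g * f) := by rw [mul_assoc]
        _ = e * g := by rw [← h4a]
        _ = g := h4b.symm
    rw [key, hgg]
end
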